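/- arXiv:2605.12901 — 3 statements merged into one kernel-verified Lean document; each statement's English description precedes it below -/
import Mathlib

section
/- Let (X, 𝒜, ν) be a σ-finite measure space, (Θ, d) a metric space, and {p_η}_{η ∈ Θ} a family of strictly positive probability densities with respect to ν that is jointly measurable. Fix η_0 ∈ Θ and write P_η for the probability measure with density p_η. Assume: (i) for ν-almost every x, the map η ↦ log p_η(x) is continuous at η_0; and (ii) there exist a neighbourhood U of η_0 and a measurable function g with ∫ g·p_{η_0} dν < ∞ such that sup_{η ∈ U} |log(p_{η_0}(x)/p_η(x))| ≤ g(x) for ν-almost every x. Then for every ε > 0 there exists δ > 0 such that d(η, η_0) < δ implies KL(P_{η_0}, P_η) < ε. -/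
open MeasureTheory
open scoped ENNReal

open Classical in
/-- Kullback–Leibler divergence `KL(P,Q) = ∫ log(dP/dQ) dP` if `P ≪ Q`, and `+∞` otherwise. -/
noncomputable def klDiv' {X : Type*} [MeasurableSpace X] (P Q : Measure X) : ℝ≥0∞ :=
  if P ≪ Q then ENNReal.ofReal (∫ x, Real.log ((P.rnDeriv Q x).toReal) ∂P) else ⊤

/-- Continuity of the Kullback–Leibler divergence at the true parameter: if the
log-densities are continuous at `η₀` for `ν`-a.e. `x` and the log-ratios are locally
dominated by a `P_{η₀}`-integrable envelope, then for every `ε > 0` there is `δ > 0`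
such that `d(η, η₀) < δ` implies `KL(P_{η₀}, P_η) < ε`. -/
theorem kl_continuity_at_truth
    {X : Type*} [MeasurableSpace X] (ν : Measure X) [SigmaFinite ν]
    {Θ : Type*} [MetricSpace Θ] [MeasurableSpace Θ] [BorelSpace Θ]
    (p : Θ → X → ℝ)
    (hjm : Measurable fun q : Θ × X => p q.1 q.2)
    (hpos : ∀ η x, 0 < p η x)
    (hprob : ∀ η, ∫⁻ x, ENNReal.ofReal (p η x) ∂ν = 1)
    (η₀ : Θ)
    (hcont : ∀ᵐ x ∂ν, ContinuousAt (fun η => Real.log (p η x)) η₀)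
    (hdom : ∃ U ∈ nhds η₀, ∃ g : X → ℝ,
        Integrable g (ν.withDensity fun x => ENNReal.ofReal (p η₀ x)) ∧
        ∀ᵐ x ∂ν, ∀ η ∈ U, |Real.log (p η₀ x / p η x)| ≤ g x) :
    ∀ ε > (0 : ℝ), ∃ δ > (0 : ℝ), ∀ η : Θ, dist η η₀ < δ →
      klDiv' (ν.withDensity fun x => ENNReal.ofReal (p η₀ x))
        (ν.withDensity fun x => ENNReal.ofReal (p η x)) < ENNReal.ofReal ε := by
  -- basic measurability of the sections
  have hmeas : ∀ η, Measurable fun x => p η x := fun η =>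
    hjm.comp (measurable_const.prodMk measurable_id)
  set P : Θ → Measure X := fun η => ν.withDensity fun x => ENNReal.ofReal (p η x) with hP
  have hPprob : ∀ η, IsProbabilityMeasure (P η) := by
    intro η
    constructor
    rw [hP]
    simp only [withDensity_apply _ MeasurableSet.univ, Measure.restrict_univ]
    exact hprob η
  have hνP : ∀ η, ν ≪ P η := fun η =>
    withDensity_absolutelyContinuous' ((ENNReal.measurable_ofReal.comp (hmeas η)).aemeasurable)
      (Filter.Eventually.of_forall fun x => by
        simp [ENNReal.ofReal_eq_zero, not_le, hpos η x])
  have hPν : ∀ η, P η ≪ ν := fun η => withDensity_absolutelyContinuous ν _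
  have hac : ∀ η, P η₀ ≪ P η := fun η => (hPν η₀).trans (hνP η)
  -- the log-ratio function
  set F : Θ → X → ℝ := fun η x => Real.log (p η₀ x) - Real.log (p η x) with hF
  have hFlog : ∀ η x, F η x = Real.log (p η₀ x / p η x) := fun η x => by
    rw [Real.log_div (hpos η₀ x).ne' (hpos η x).ne']
  -- identify the KL divergence with ∫ F η ∂(P η₀)
  have hkl : ∀ η, klDiv' (P η₀) (P η) = ENNReal.ofReal (∫ x, F η x ∂(P η₀)) := by
    intro η
    have : IsProbabilityMeasure (P η) := hPprob η
    have hratio_meas : Measurable fun x => ENNReal.ofReal (p η₀ x / p η x) :=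
      ENNReal.measurable_ofReal.comp ((hmeas η₀).div (hmeas η))
    have hwd : (P η).withDensity (fun x => ENNReal.ofReal (p η₀ x / p η x)) = P η₀ := by
      show (ν.withDensity fun x => ENNReal.ofReal (p η x)).withDensity
          (fun x => ENNReal.ofReal (p η₀ x / p η x)) = ν.withDensity fun x => ENNReal.ofReal (p η₀ x)
      rw [← withDensity_mul ν ((hmeas η).ennreal_ofReal) hratio_meas]
      congr 1
      funext x
      simp only [Pi.mul_apply]
      rw [← ENNReal.ofReal_mul (hpos η x).le, mul_div_cancel₀ _ (hpos η x).ne']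
    have hrn : (P η₀).rnDeriv (P η)
        =ᵐ[P η] fun x => ENNReal.ofReal (p η₀ x / p η x) := by
      rw [← hwd]
      exact Measure.rnDeriv_withDensity (P η) hratio_meas
    have hrn' : (P η₀).rnDeriv (P η)
        =ᵐ[P η₀] fun x => ENNReal.ofReal (p η₀ x / p η x) := (hac η).ae_eq hrn
    have hint : ∫ x, Real.log (((P η₀).rnDeriv (P η) x).toReal) ∂(P η₀)
        = ∫ x, F η x ∂(P η₀) := by
      refine integral_congr_ae ?_
      filter_upwards [hrn'] with x hx
      rw [hx, ENNReal.toReal_ofReal (div_nonneg (hpos η₀ x).le (hpos η x).le), ← hFlog]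
    rw [klDiv', if_pos (hac η), hint]
  -- continuity of η ↦ ∫ F η ∂(P η₀) at η₀
  obtain ⟨U, hU, g, hg_int, hg_bound⟩ := hdom
  have hcontInt : ContinuousAt (fun η => ∫ x, F η x ∂(P η₀)) η₀ := by
    refine continuousAt_of_dominated ?_ ?_ hg_int ?_
    · exact Filter.Eventually.of_forall fun η =>
        ((Real.measurable_log.comp (hmeas η₀)).sub
          (Real.measurable_log.comp (hmeas η))).aestronglyMeasurable
    · filter_upwards [hU] with η hη
      filter_upwards [(hPν η₀).ae_le hg_bound] with x hx
      rw [Real.norm_eq_abs, hFlog]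
      exact hx η hη
    · filter_upwards [(hPν η₀).ae_le hcont] with x hx
      exact continuousAt_const.sub hx
  -- conclude
  intro ε hε
  have h0 : (∫ x, F η₀ x ∂(P η₀)) = 0 := by
    simp [hF]
  have hev : ∀ᶠ η in nhds η₀, |∫ x, F η x ∂(P η₀)| < ε := by
    have := hcontInt.tendsto
    rw [h0] at this
    have := this (Metric.ball_mem_nhds 0 hε)
    filter_upwards [this] with η hη
    simpa [Real.dist_eq] using hη
  rw [Metric.eventually_nhds_iff] at hev
  obtain ⟨δ, hδ, hball⟩ := hev
  refine ⟨δ, hδ, fun η hη => ?_⟩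
  rw [hkl η]
  rw [ENNReal.ofReal_lt_ofReal_iff hε]
  exact lt_of_le_of_lt (le_abs_self _) (hball hη)
end

section
/- Let (X, 𝒜, ν) be a σ-finite measure space, (Θ, d) a compact metric space, and {p_η}_{η ∈ Θ} a jointly measurable family of strictly positive probability densities with respect to ν; write P_η for the measure with density p_η and fix η_0 ∈ Θ. Assume: (i) for ν-almost every x, the map η ↦ log p_η(x) is continuous on Θ; (ii) there is a measurable envelope G with sup_{η ∈ Θ} |log p_η(x)| ≤ G(x) for ν-a.e. x and ∫ G·p_{η_0} dν < ∞; (iii) identifiability: KL(P_{η_0}, P_η) = 0 implies d(η, η_0) = 0; and (iv) the prior Π is a Borel probability measure on Θ with Π(B(η_0, δ)) > 0 for every δ > 0. Let D_1, D_2, … be i.i.d. with law P_{η_0} and define the posterior Π(A | D_{1:L}) = (∫_A ∏_{ℓ=1}^L p_η(D_ℓ) dΠ(η)) / (∫_Θ ∏_{ℓ=1}^L p_η(D_ℓ) dΠ(η)). Then for every ε > 0, the random variable Π({η : d(η, η_0) > ε} | D_{1:L}) converges to 0 in P_{η_0}-probability as L → ∞. -/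
open MeasureTheory Filter
open scoped ENNReal

/-- The posterior mass of a set `A ⊆ Θ` given the first `L` observations:
`Π(A | D_{1:L}) = (∫_A ∏_{ℓ<L} p_η(D_ℓ) dΠ(η)) / (∫_Θ ∏_{ℓ<L} p_η(D_ℓ) dΠ(η))`. -/
noncomputable def posteriorMass {X Θ Ω : Type*} [MeasurableSpace X] [MeasurableSpace Θ]
    (p : Θ → X → ℝ) (prior : Measure Θ) (D : ℕ → Ω → X) (L : ℕ) (ω : Ω) (A : Set Θ) :
    ℝ≥0∞ :=
  (∫⁻ η in A, ∏ ℓ ∈ Finset.range L, ENNReal.ofReal (p η (D ℓ ω)) ∂prior) /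
    (∫⁻ η, ∏ ℓ ∈ Finset.range L, ENNReal.ofReal (p η (D ℓ ω)) ∂prior)

/-!
Write `ℓ_η = log p_η - log p_{η₀}`, so that the posterior mass of `A` is
`∫_A exp (∑_{ℓ<L} ℓ_η(D_ℓ)) dΠ / ∫ exp (∑_{ℓ<L} ℓ_η(D_ℓ)) dΠ`, and
`∫ ℓ_η dP_{η₀} = -KL(P_{η₀}, P_η)`. By identifiability this mean is negative on the compact set
`K = {η | ε ≤ d(η, η₀)}`. Wald's argument (dominated convergence for suprema over small balls,
a finite subcover of `K` and the strong law) gives `m > 0` with `∑_{ℓ<L} ℓ_η(D_ℓ) ≤ -mL` on `K`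
for all large `L`, almost surely. The mean is continuous and vanishes at `η₀`, so it exceeds
`-m/4` on a small ball `B`; Jensen's inequality under `Π(· | B)` and the strong law bound the
denominator below by `Π(B) exp(-mL/2)`. So the posterior mass of `{d(η, η₀) > ε}` is eventually
at most `exp(-mL/2) / Π(B)`: it tends to `0` almost surely, hence in probability.
-/

open TopologicalSpace Metric ProbabilityTheory

noncomputable def logLikRatio {Θ X : Type*} (p : Θ → X → ℝ) (η₀ η : Θ) (x : X) : ℝ :=
  Real.log (p η x) - Real.log (p η₀ x)

lemma measurable_logLikRatio {Θ X : Type*} [MeasurableSpace Θ] [MeasurableSpace X]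
    {p : Θ → X → ℝ} (hp : Measurable fun q : Θ × X => p q.1 q.2) (η₀ : Θ) :
    Measurable fun q : Θ × X => logLikRatio p η₀ q.1 q.2 :=
  (Real.measurable_log.comp hp).sub
    (Real.measurable_log.comp (hp.comp (measurable_const.prodMk measurable_snd)))

lemma klDiv'_withDensity_ofReal {X : Type*} [MeasurableSpace X] (ν : Measure X) [SigmaFinite ν]
    {q r : X → ℝ} (hq : Measurable q) (hr : Measurable r) (hq0 : ∀ x, 0 < q x)
    (hr0 : ∀ x, 0 < r x) :
    klDiv' (ν.withDensity fun x => ENNReal.ofReal (q x))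
        (ν.withDensity fun x => ENNReal.ofReal (r x)) =
      ENNReal.ofReal (∫ x, (Real.log (q x) - Real.log (r x))
        ∂ν.withDensity fun x => ENNReal.ofReal (q x)) := by
  have hr_ne : ∀ᵐ x ∂ν, ENNReal.ofReal (r x) ≠ 0 :=
    ae_of_all _ fun x => (ENNReal.ofReal_pos.2 (hr0 x)).ne'
  have : SigmaFinite (ν.withDensity fun x => ENNReal.ofReal (q x)) :=
    SigmaFinite.withDensity_of_ne_top (ae_of_all _ fun _ => ENNReal.ofReal_ne_top)
  have hac := (withDensity_absolutelyContinuous ν fun x => ENNReal.ofReal (q x)).trans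
    (withDensity_absolutelyContinuous' hr.ennreal_ofReal.aemeasurable hr_ne)
  rw [klDiv', if_pos hac]
  refine congrArg _ (integral_congr_ae ?_)
  filter_upwards [(withDensity_absolutelyContinuous ν _).ae_le <|
    (Measure.rnDeriv_withDensity_right (ν.withDensity fun x => ENNReal.ofReal (q x)) ν
      hr.ennreal_ofReal.aemeasurable hr_ne (ae_of_all _ fun _ => ENNReal.ofReal_ne_top)).and
    (Measure.rnDeriv_withDensity ν hq.ennreal_ofReal)] with x ⟨hx₁, hx₂⟩
  rw [hx₁, hx₂, ENNReal.toReal_mul, ENNReal.toReal_inv,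
    ENNReal.toReal_ofReal (hr0 x).le, ENNReal.toReal_ofReal (hq0 x).le,
    Real.log_mul (inv_ne_zero (hr0 x).ne') (hq0 x).ne', Real.log_inv]
  ring

lemma integral_logLikRatio_neg_of_klDiv'_ne_zero {X Θ : Type*} [MeasurableSpace X]
    (ν : Measure X) [SigmaFinite ν] {p : Θ → X → ℝ} (hp : ∀ η, Measurable (p η))
    (hpos : ∀ η x, 0 < p η x) {η₀ η : Θ}
    (hKL : klDiv' (ν.withDensity fun x => ENNReal.ofReal (p η₀ x))
      (ν.withDensity fun x => ENNReal.ofReal (p η x)) ≠ 0) :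
    ∫ x, logLikRatio p η₀ η x ∂ν.withDensity (fun x => ENNReal.ofReal (p η₀ x)) < 0 := by
  rw [klDiv'_withDensity_ofReal ν (hp η₀) (hp η) (hpos η₀) (hpos η), ne_eq,
    ENNReal.ofReal_eq_zero, not_le] at hKL
  have hflip : ∀ x, Real.log (p η₀ x) - Real.log (p η x) = -logLikRatio p η₀ η x :=
    fun x => (neg_sub _ _).symm
  simp only [hflip, integral_neg] at hKL
  linarith

section StrongLaw

variable {X Ω : Type*} [MeasurableSpace X] [MeasurableSpace Ω] {μ : Measure Ω}
  {P : Measure X} {D : ℕ → Ω → X}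

lemma ae_tendsto_average_comp [IsProbabilityMeasure μ] (hD : ∀ ℓ, Measurable (D ℓ))
    (hindep : iIndepFun D μ) (hlaw : ∀ ℓ, μ.map (D ℓ) = P)
    {g : X → ℝ} (hg : Measurable g) (hgint : Integrable g P) :
    ∀ᵐ ω ∂μ, Tendsto (fun L : ℕ => (L : ℝ)⁻¹ * ∑ ℓ ∈ Finset.range L, g (D ℓ ω))
      atTop (nhds (∫ x, g x ∂P)) := by
  have hident : ∀ ℓ, IdentDistrib (g ∘ D ℓ) (g ∘ D 0) μ μ := fun ℓ =>
    ⟨(hg.comp (hD ℓ)).aemeasurable, (hg.comp (hD 0)).aemeasurable, by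
      rw [← Measure.map_map hg (hD ℓ), ← Measure.map_map hg (hD 0), hlaw, hlaw]⟩
  have hint : Integrable (g ∘ D 0) μ :=
    (integrable_map_measure (hlaw 0 ▸ hg.aestronglyMeasurable) (hD 0).aemeasurable).mp
      (hlaw 0 ▸ hgint)
  have hmean : ∫ ω, g (D 0 ω) ∂μ = ∫ x, g x ∂P := by
    rw [← hlaw 0, integral_map (hD 0).aemeasurable (hlaw 0 ▸ hg.aestronglyMeasurable)]
  have hpair := fun i j (hij : i ≠ j) => (hindep.comp (fun _ => g) fun _ => hg).indepFun hij
  simpa [hmean] using strong_law_ae _ hint hpair hident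

lemma ae_forall_of_ae_law (hD : ∀ ℓ, Measurable (D ℓ)) (hlaw : ∀ ℓ, μ.map (D ℓ) = P)
    {q : X → Prop} (hq : ∀ᵐ x ∂P, q x) : ∀ᵐ ω ∂μ, ∀ ℓ, q (D ℓ ω) :=
  ae_all_iff.mpr fun ℓ => ae_of_ae_map (hD ℓ).aemeasurable (hlaw ℓ ▸ hq)

end StrongLaw

section Bracketing

variable {X Θ : Type*} [MeasurableSpace X] [MetricSpace Θ]

/-- For a dense sequence `u` and continuous `g` this is the supremum of `g` over the ball;
taking it over the countably many points `u m` keeps it measurable as a function of the data. -/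
noncomputable def ballSup (u : ℕ → Θ) (g : Θ → ℝ) (η' : Θ) (r : ℝ) : ℝ :=
  ⨆ m : {m : ℕ // u m ∈ ball η' r}, g (u m)

variable {u : ℕ → Θ} {g : Θ → ℝ} {η' : Θ} {r C : ℝ}

lemma le_ballSup (hu : DenseRange u) (hg : Continuous g) (hC : ∀ η, g η ≤ C) {η : Θ}
    (hη : η ∈ ball η' r) : g η ≤ ballSup u g η' r := by
  have hbdd : BddAbove (Set.range fun m : {m : ℕ // u m ∈ ball η' r} => g (u m)) :=
    ⟨C, by rintro _ ⟨m, rfl⟩; exact hC _⟩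
  have hsub : ball η' r ∩ Set.range u ⊆ {η | g η ≤ ballSup u g η' r} := by
    rintro _ ⟨hm, m, rfl⟩
    exact le_ciSup hbdd ⟨m, hm⟩
  exact closure_minimal hsub (isClosed_le hg continuous_const)
    (hu.open_subset_closure_inter isOpen_ball hη)

lemma ballSup_le (hu : DenseRange u) (hr : 0 < r) (hC : ∀ η ∈ ball η' r, g η ≤ C) :
    ballSup u g η' r ≤ C := by
  obtain ⟨m, hm⟩ := hu.exists_mem_open isOpen_ball ⟨η', mem_ball_self hr⟩
  have : Nonempty {m : ℕ // u m ∈ ball η' r} := ⟨⟨m, hm⟩⟩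
  exact ciSup_le fun m => hC _ m.2

lemma abs_ballSup_le (hu : DenseRange u) (hg : Continuous g) (hr : 0 < r)
    (hC : ∀ η, |g η| ≤ C) : |ballSup u g η' r| ≤ C := by
  have hlow := le_ballSup (η' := η') hu hg (fun η => (abs_le.mp (hC η)).2) (mem_ball_self hr)
  have hup := ballSup_le (η' := η') hu hr fun η _ => (abs_le.mp (hC η)).2
  exact abs_le.mpr ⟨(abs_le.mp (hC η')).1.trans hlow, hup⟩

lemma tendsto_ballSup (hu : DenseRange u) (hg : Continuous g) (hC : ∀ η, g η ≤ C) :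
    Tendsto (fun n : ℕ => ballSup u g η' (1 / (n + 1))) atTop (nhds (g η')) := by
  refine tendsto_order.2 ⟨fun a ha => Eventually.of_forall fun n =>
    ha.trans_le (le_ballSup hu hg hC (mem_ball_self Nat.one_div_pos_of_nat)), fun a ha => ?_⟩
  obtain ⟨b, hgb, hba⟩ := exists_between ha
  obtain ⟨δ, hδ, hball⟩ :=
    Metric.eventually_nhds_iff_ball.mp (hg.continuousAt.eventually (gt_mem_nhds hgb))
  obtain ⟨N, hN⟩ := exists_nat_one_div_lt hδ
  filter_upwards [eventually_ge_atTop N] with n hn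
  refine (ballSup_le hu Nat.one_div_pos_of_nat fun η hη => (hball η ?_).le).trans_lt hba
  refine ball_subset_ball ((one_div_le_one_div_of_le (by positivity) ?_).trans hN.le) hη
  exact_mod_cast Nat.succ_le_succ hn

lemma exists_ball_le_integral_lt [SeparableSpace Θ] {P : Measure X} {f : Θ → X → ℝ}
    (hf : ∀ η, Measurable (f η)) (hcont : ∀ᵐ x ∂P, Continuous fun η => f η x)
    {G : X → ℝ} (hG : Integrable G P) (hdom : ∀ᵐ x ∂P, ∀ η, |f η x| ≤ G x)
    (η' : Θ) {a : ℝ} (ha : ∫ x, f η' x ∂P < a) :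
    ∃ δ > 0, ∃ ψ : X → ℝ, Measurable ψ ∧ Integrable ψ P ∧ ∫ x, ψ x ∂P < a ∧
      ∀ᵐ x ∂P, ∀ η ∈ ball η' δ, f η x ≤ ψ x := by
  have : Nonempty Θ := ⟨η'⟩
  obtain ⟨u, hu⟩ := exists_dense_seq Θ
  set ψ : ℕ → X → ℝ := fun n x => ballSup u (fun η => f η x) η' (1 / (n + 1))
  have hmeas : ∀ n, Measurable (ψ n) := fun n => Measurable.iSup fun m => hf _
  have hgood := hcont.and hdom
  have hbound : ∀ n, ∀ᵐ x ∂P, ‖ψ n x‖ ≤ G x := fun n =>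
    hgood.mono fun x hx => abs_ballSup_le hu hx.1 Nat.one_div_pos_of_nat hx.2
  have hlim : Tendsto (fun n => ∫ x, ψ n x ∂P) atTop (nhds (∫ x, f η' x ∂P)) :=
    tendsto_integral_of_dominated_convergence G (fun n => (hmeas n).aestronglyMeasurable) hG
      hbound (hgood.mono fun x hx => tendsto_ballSup hu hx.1 fun η => (abs_le.mp (hx.2 η)).2)
  obtain ⟨n, hn⟩ := (hlim.eventually (gt_mem_nhds ha)).exists
  refine ⟨1 / (n + 1), Nat.one_div_pos_of_nat, ψ n, hmeas n,
    hG.mono' (hmeas n).aestronglyMeasurable (hbound n), hn, ?_⟩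
  exact hgood.mono fun x hx η hη => le_ballSup hu hx.1 (fun η => (abs_le.mp (hx.2 η)).2) hη

lemma exists_ball_lt_integral {P : Measure X} {f : Θ → X → ℝ} (hf : ∀ η, Measurable (f η))
    (hcont : ∀ᵐ x ∂P, Continuous fun η => f η x) {G : X → ℝ} (hG : Integrable G P)
    (hdom : ∀ᵐ x ∂P, ∀ η, |f η x| ≤ G x) (η₀ : Θ) {b : ℝ} (hb : b < ∫ x, f η₀ x ∂P) :
    ∃ δ > 0, ∀ η ∈ ball η₀ δ, b < ∫ x, f η x ∂P := by
  have hmean : Continuous fun η => ∫ x, f η x ∂P :=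
    continuous_of_dominated (fun η => (hf η).aestronglyMeasurable)
      (fun η => hdom.mono fun x hx => by simpa using hx η) hG hcont
  exact Metric.eventually_nhds_iff_ball.mp ((hmean.tendsto η₀).eventually (lt_mem_nhds hb))

end Bracketing

section UniformLaw

variable {X Θ Ω : Type*} [MeasurableSpace X] [MeasurableSpace Ω] {μ : Measure Ω}
  [IsProbabilityMeasure μ] {P : Measure X} {D : ℕ → Ω → X} {f : Θ → X → ℝ} {G : X → ℝ}

lemma ae_eventually_sum_le_of_isCompact [MetricSpace Θ] [SeparableSpace Θ]
    (hD : ∀ ℓ, Measurable (D ℓ)) (hindep : iIndepFun D μ)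
    (hlaw : ∀ ℓ, μ.map (D ℓ) = P) (hf : ∀ η, Measurable (f η))
    (hcont : ∀ᵐ x ∂P, Continuous fun η => f η x) (hG : Integrable G P)
    (hdom : ∀ᵐ x ∂P, ∀ η, |f η x| ≤ G x) {K : Set Θ} (hK : IsCompact K)
    (hneg : ∀ η ∈ K, ∫ x, f η x ∂P < 0) :
    ∃ m > 0, ∀ᵐ ω ∂μ, ∀ᶠ L in atTop, ∀ η ∈ K,
      ∑ ℓ ∈ Finset.range L, f η (D ℓ ω) ≤ -(m * L) := by
  refine hK.induction_on ?_ ?_ ?_ ?_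
  · exact ⟨1, one_pos, ae_of_all _ fun ω => Eventually.of_forall fun L η hη => hη.elim⟩
  · rintro s t hst ⟨m, hm, h⟩
    exact ⟨m, hm, h.mono fun ω hω => hω.mono fun L hL η hη => hL η (hst hη)⟩
  · rintro s t ⟨m₁, hm₁, h₁⟩ ⟨m₂, hm₂, h₂⟩
    refine ⟨min m₁ m₂, lt_min hm₁ hm₂, ?_⟩
    filter_upwards [h₁, h₂] with ω hω₁ hω₂
    filter_upwards [hω₁, hω₂] with L hL₁ hL₂ η hη
    have hmin₁ := mul_le_mul_of_nonneg_right (min_le_left m₁ m₂) L.cast_nonneg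
    have hmin₂ := mul_le_mul_of_nonneg_right (min_le_right m₁ m₂) L.cast_nonneg
    rcases hη with hη | hη
    · linarith [hL₁ η hη]
    · linarith [hL₂ η hη]
  · intro η' hη'
    obtain ⟨δ, hδ, ψ, hψm, hψi, hψneg, hψle⟩ :=
      exists_ball_le_integral_lt hf hcont hG hdom η' (hneg η' hη')
    set I := ∫ x, ψ x ∂P
    refine ⟨ball η' δ, mem_nhdsWithin_of_mem_nhds (ball_mem_nhds η' hδ), -I / 2, by linarith, ?_⟩
    filter_upwards [ae_tendsto_average_comp hD hindep hlaw hψm hψi,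
      ae_forall_of_ae_law hD hlaw hψle] with ω hlim hle
    filter_upwards [hlim.eventually (gt_mem_nhds (by linarith : I < I / 2)),
      eventually_gt_atTop 0] with L hL hL0 η hη
    have hsum := (inv_mul_le_iff₀ (by exact_mod_cast hL0 : (0 : ℝ) < L)).mp hL.le
    calc ∑ ℓ ∈ Finset.range L, f η (D ℓ ω) ≤ ∑ ℓ ∈ Finset.range L, ψ (D ℓ ω) :=
          Finset.sum_le_sum fun ℓ _ => hle ℓ η hη
      _ ≤ -(-I / 2 * L) := by linarith

lemma ae_eventually_le_integral_sum [MeasurableSpace Θ] [SFinite P] {π : Measure Θ}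
    [IsProbabilityMeasure π] (hD : ∀ ℓ, Measurable (D ℓ))
    (hindep : iIndepFun D μ) (hlaw : ∀ ℓ, μ.map (D ℓ) = P)
    (hf : Measurable fun q : Θ × X => f q.1 q.2) (hG : Integrable G P)
    (hdom : ∀ᵐ x ∂P, ∀ η, |f η x| ≤ G x) {b b' : ℝ} (hb : ∀ᵐ η ∂π, b ≤ ∫ x, f η x ∂P)
    (hb' : b' < b) :
    ∀ᵐ ω ∂μ, ∀ᶠ L in atTop, b' * L ≤ ∫ η, ∑ ℓ ∈ Finset.range L, f η (D ℓ ω) ∂π := by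
  set g : X → ℝ := fun x => ∫ η, f η x ∂π
  have hswap : Measurable fun q : X × Θ => f q.2 q.1 := hf.comp measurable_swap
  have hgm : Measurable g := hswap.stronglyMeasurable.integral_prod_right'.measurable
  have hint_π : ∀ x, (∀ η, |f η x| ≤ G x) → Integrable (fun η => f η x) π := fun x hx =>
    .of_bound (hf.comp (measurable_id.prodMk measurable_const)).aestronglyMeasurable (G x)
      (ae_of_all _ fun η => by simpa using hx η)
  have hgi : Integrable g P := hG.mono' hgm.aestronglyMeasurable <| hdom.mono fun x hx => by
    simpa using norm_integral_le_of_norm_le_const (μ := π) (f := fun η => f η x)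
      (ae_of_all _ fun η => by simpa using hx η)
  have hmean : b ≤ ∫ x, g x ∂P := by
    have hprod : Integrable (fun q : X × Θ => f q.2 q.1) (P.prod π) :=
      (hG.comp_fst π).mono' hswap.aestronglyMeasurable
        (Measure.quasiMeasurePreserving_fst.ae hdom |>.mono fun q hq => hq q.2)
    have hI : Integrable (fun η => ∫ x, f η x ∂P) π :=
      .of_bound hf.stronglyMeasurable.integral_prod_right'.aestronglyMeasurable (∫ x, G x ∂P)
        (ae_of_all _ fun η => norm_integral_le_of_norm_le hG (hdom.mono fun x hx => hx η))
    rw [integral_integral_swap hprod]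
    simpa using integral_mono_ae (integrable_const b) hI hb
  filter_upwards [ae_tendsto_average_comp hD hindep hlaw hgm hgi,
    ae_forall_of_ae_law hD hlaw hdom] with ω hlim hdomω
  filter_upwards [hlim.eventually (lt_mem_nhds (hb'.trans_le hmean)), eventually_gt_atTop 0]
    with L hL hL0
  rw [integral_finsetSum _ fun ℓ _ => hint_π _ (hdomω ℓ)]
  rw [lt_inv_mul_iff₀ (by exact_mod_cast hL0 : (0 : ℝ) < L)] at hL
  simpa [mul_comm] using hL.le

end UniformLaw

section Posterior

variable {X Θ Ω : Type*} [MeasurableSpace X] [MeasurableSpace Θ] {p : Θ → X → ℝ}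
  {prior : Measure Θ} {D : ℕ → Ω → X}

lemma measurable_posteriorMass [MeasurableSpace Ω] [SFinite prior]
    (hp : Measurable fun q : Θ × X => p q.1 q.2) (hD : ∀ ℓ, Measurable (D ℓ)) (L : ℕ)
    (A : Set Θ) : Measurable fun ω => posteriorMass p prior D L ω A := by
  have hF : Measurable fun q : Ω × Θ => ∏ ℓ ∈ Finset.range L, ENNReal.ofReal (p q.2 (D ℓ q.1)) :=
    Finset.measurable_prod _ fun ℓ _ => ENNReal.measurable_ofReal.comp
      (hp.comp (measurable_snd.prodMk ((hD ℓ).comp measurable_fst)))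
  exact hF.lintegral_prod_right'.div hF.lintegral_prod_right'

lemma posteriorMass_eq_div_lintegral_exp (hpos : ∀ η x, 0 < p η x) (η₀ : Θ) (L : ℕ) (ω : Ω)
    (A : Set Θ) :
    posteriorMass p prior D L ω A =
      (∫⁻ η in A, ENNReal.ofReal
          (Real.exp (∑ ℓ ∈ Finset.range L, logLikRatio p η₀ η (D ℓ ω))) ∂prior) /
        ∫⁻ η, ENNReal.ofReal
          (Real.exp (∑ ℓ ∈ Finset.range L, logLikRatio p η₀ η (D ℓ ω))) ∂prior := by
  set c := ENNReal.ofReal (∏ ℓ ∈ Finset.range L, p η₀ (D ℓ ω))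
  have hfactor : ∀ η, ∏ ℓ ∈ Finset.range L, ENNReal.ofReal (p η (D ℓ ω)) =
      c * ENNReal.ofReal (Real.exp (∑ ℓ ∈ Finset.range L, logLikRatio p η₀ η (D ℓ ω))) := by
    intro η
    rw [← ENNReal.ofReal_mul (Finset.prod_nonneg fun ℓ _ => (hpos _ _).le), Real.exp_sum,
      ← Finset.prod_mul_distrib, ← ENNReal.ofReal_prod_of_nonneg fun ℓ _ => (hpos _ _).le]
    refine congrArg _ (Finset.prod_congr rfl fun ℓ _ => ?_)
    rw [logLikRatio, Real.exp_sub, Real.exp_log (hpos _ _), Real.exp_log (hpos _ _),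
      mul_div_cancel₀ _ (hpos _ _).ne']
  have hc : c ≠ 0 := (ENNReal.ofReal_pos.2 (Finset.prod_pos fun ℓ _ => hpos _ _)).ne'
  simp only [posteriorMass, hfactor, lintegral_const_mul' c _ ENNReal.ofReal_ne_top]
  exact ENNReal.mul_div_mul_left _ _ hc ENNReal.ofReal_ne_top

variable {S : Θ → ℝ} {R : ℝ} {B : Set Θ}

lemma mul_ofReal_exp_integral_cond_le [IsFiniteMeasure prior] (hS : Measurable S)
    (hR : ∀ η, |S η| ≤ R) (hB : prior B ≠ 0) :
    prior B * ENNReal.ofReal (Real.exp (∫ η, S η ∂prior[|B])) ≤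
      ∫⁻ η, ENNReal.ofReal (Real.exp (S η)) ∂prior := by
  have : IsProbabilityMeasure prior[|B] := cond_isProbabilityMeasure hB
  have hexp : Integrable (fun η => Real.exp (S η)) prior[|B] :=
    .of_bound (Real.measurable_exp.comp hS).aestronglyMeasurable (Real.exp R) (ae_of_all _
      fun η => by simpa using Real.exp_le_exp.2 (abs_le.1 (hR η)).2)
  have hjensen : Real.exp (∫ η, S η ∂prior[|B]) ≤ ∫ η, Real.exp (S η) ∂prior[|B] :=
    convexOn_exp.map_integral_le Real.continuous_exp.continuousOn isClosed_univ
      (ae_of_all _ fun _ => trivial)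
      (.of_bound hS.aestronglyMeasurable R (ae_of_all _ fun η => by simpa using hR η)) hexp
  calc prior B * ENNReal.ofReal (Real.exp (∫ η, S η ∂prior[|B]))
      ≤ prior B * ∫⁻ η, ENNReal.ofReal (Real.exp (S η)) ∂prior[|B] := by
        rw [← ofReal_integral_eq_lintegral_ofReal hexp (ae_of_all _ fun η => (Real.exp_pos _).le)]
        gcongr
    _ = ∫⁻ η in B, ENNReal.ofReal (Real.exp (S η)) ∂prior := by
        rw [ProbabilityTheory.cond, lintegral_smul_measure, smul_eq_mul, ← mul_assoc,
          ENNReal.mul_inv_cancel hB (measure_ne_top _ _), one_mul]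
    _ ≤ ∫⁻ η, ENNReal.ofReal (Real.exp (S η)) ∂prior := setLIntegral_le_lintegral _ _

lemma setLIntegral_exp_div_lintegral_exp_le [IsProbabilityMeasure prior] (hS : Measurable S)
    (hR : ∀ η, |S η| ≤ R) (hB : prior B ≠ 0) {A : Set Θ} {a b : ℝ} (hSA : ∀ η ∈ A, S η ≤ a)
    (hSB : b ≤ ∫ η, S η ∂prior[|B]) :
    (∫⁻ η in A, ENNReal.ofReal (Real.exp (S η)) ∂prior) /
        ∫⁻ η, ENNReal.ofReal (Real.exp (S η)) ∂prior ≤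
      ENNReal.ofReal (Real.exp (a - b)) / prior B := by
  have hnum : ∫⁻ η in A, ENNReal.ofReal (Real.exp (S η)) ∂prior ≤
      ENNReal.ofReal (Real.exp (a - b)) * ENNReal.ofReal (Real.exp b) :=
    calc ∫⁻ η in A, ENNReal.ofReal (Real.exp (S η)) ∂prior
        ≤ ∫⁻ _ in A, ENNReal.ofReal (Real.exp a) ∂prior :=
          setLIntegral_mono measurable_const fun η hη =>
            ENNReal.ofReal_le_ofReal (Real.exp_le_exp.2 (hSA η hη))
      _ = ENNReal.ofReal (Real.exp a) * prior A := setLIntegral_const _ _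
      _ ≤ ENNReal.ofReal (Real.exp a) := mul_le_of_le_one_right' prob_le_one
      _ = ENNReal.ofReal (Real.exp (a - b)) * ENNReal.ofReal (Real.exp b) := by
          rw [← ENNReal.ofReal_mul (Real.exp_pos _).le, ← Real.exp_add, sub_add_cancel]
  have hden : prior B * ENNReal.ofReal (Real.exp b) ≤
      ∫⁻ η, ENNReal.ofReal (Real.exp (S η)) ∂prior :=
    le_trans (by gcongr) (mul_ofReal_exp_integral_cond_le hS hR hB)
  calc _ ≤ ENNReal.ofReal (Real.exp (a - b)) * ENNReal.ofReal (Real.exp b) /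
        (prior B * ENNReal.ofReal (Real.exp b)) := ENNReal.div_le_div hnum hden
    _ = _ := by
      rw [ENNReal.mul_div_mul_right _ _
        (ENNReal.ofReal_pos.2 (Real.exp_pos b)).ne' ENNReal.ofReal_ne_top]

lemma posteriorMass_le [IsProbabilityMeasure prior] (hp : Measurable fun q : Θ × X => p q.1 q.2)
    (hpos : ∀ η x, 0 < p η x) {η₀ : Θ} {L : ℕ} {ω : Ω} {G : X → ℝ}
    (hdom : ∀ ℓ η, |logLikRatio p η₀ η (D ℓ ω)| ≤ G (D ℓ ω)) (hB : prior B ≠ 0) {A : Set Θ}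
    {a b : ℝ} (hA : ∀ η ∈ A, ∑ ℓ ∈ Finset.range L, logLikRatio p η₀ η (D ℓ ω) ≤ a)
    (hBb : b ≤ ∫ η, ∑ ℓ ∈ Finset.range L, logLikRatio p η₀ η (D ℓ ω) ∂prior[|B]) :
    posteriorMass p prior D L ω A ≤ ENNReal.ofReal (Real.exp (a - b)) / prior B := by
  rw [posteriorMass_eq_div_lintegral_exp hpos η₀]
  exact setLIntegral_exp_div_lintegral_exp_le (Finset.measurable_sum _ fun ℓ _ =>
      (measurable_logLikRatio hp η₀).comp (measurable_id.prodMk measurable_const))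
    (fun η => (Finset.abs_sum_le_sum_abs _ _).trans (Finset.sum_le_sum fun ℓ _ => hdom ℓ η))
    hB hA hBb

end Posterior

section Consistency

variable {X Θ Ω : Type*} [MeasurableSpace X] [MetricSpace Θ] [CompactSpace Θ]
  [MeasurableSpace Θ] [BorelSpace Θ] [MeasurableSpace Ω]

theorem ae_tendsto_posteriorMass_zero {P : Measure X} [SFinite P] {p : Θ → X → ℝ}
    (hp : Measurable fun q : Θ × X => p q.1 q.2) (hpos : ∀ η x, 0 < p η x) {η₀ : Θ}
    (hcont : ∀ᵐ x ∂P, Continuous fun η => logLikRatio p η₀ η x) {G : X → ℝ}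
    (hG : Integrable G P) (hdom : ∀ᵐ x ∂P, ∀ η, |logLikRatio p η₀ η x| ≤ G x) {ε : ℝ}
    (hneg : ∀ η, ε ≤ dist η η₀ → ∫ x, logLikRatio p η₀ η x ∂P < 0)
    {prior : Measure Θ} [IsProbabilityMeasure prior] (hprior : ∀ δ > 0, 0 < prior (ball η₀ δ))
    {μ : Measure Ω} [IsProbabilityMeasure μ] {D : ℕ → Ω → X} (hD : ∀ ℓ, Measurable (D ℓ))
    (hindep : iIndepFun D μ) (hlaw : ∀ ℓ, μ.map (D ℓ) = P) :
    ∀ᵐ ω ∂μ, Tendsto (fun L => posteriorMass p prior D L ω {η | ε < dist η η₀})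
      atTop (nhds 0) := by
  have hℓ := measurable_logLikRatio hp η₀
  have hℓη : ∀ η, Measurable (logLikRatio p η₀ η) := fun η =>
    hℓ.comp (measurable_const.prodMk measurable_id)
  obtain ⟨m, hm, hnum⟩ := ae_eventually_sum_le_of_isCompact hD hindep hlaw hℓη hcont hG hdom
    (isClosed_le continuous_const (continuous_id.dist continuous_const)).isCompact hneg
  obtain ⟨δ, hδ, hball⟩ := exists_ball_lt_integral hℓη hcont hG hdom η₀ (b := -(m / 4))
    (by simp only [logLikRatio, sub_self, integral_zero]; linarith)
  have hB : prior (ball η₀ δ) ≠ 0 := (hprior δ hδ).ne'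
  have : IsProbabilityMeasure prior[|ball η₀ δ] := cond_isProbabilityMeasure hB
  have hden := ae_eventually_le_integral_sum (π := prior[|ball η₀ δ]) hD hindep hlaw hℓ hG hdom
    ((ae_cond_mem isOpen_ball.measurableSet).mono fun η hη => (hball η hη).le)
    (by linarith : -(m / 2) < -(m / 4))
  have hlim : Tendsto (fun L : ℕ => ENNReal.ofReal (Real.exp (-(m / 2) * L)) / prior (ball η₀ δ))
      atTop (nhds 0) := by
    have := Real.tendsto_exp_atBot.comp
      (tendsto_natCast_atTop_atTop.const_mul_atTop_of_neg (by linarith : -(m / 2) < 0))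
    simpa using ENNReal.Tendsto.div_const (ENNReal.tendsto_ofReal this) (Or.inr hB)
  filter_upwards [hnum, hden, ae_forall_of_ae_law hD hlaw hdom] with ω hnumω hdenω hdomω
  refine tendsto_of_tendsto_of_tendsto_of_le_of_le' tendsto_const_nhds hlim
    (Eventually.of_forall fun _ => zero_le) ?_
  filter_upwards [hnumω, hdenω] with L hL₁ hL₂
  refine (posteriorMass_le hp hpos hdomω hB (fun η hη => hL₁ η hη.le) hL₂).trans_eq ?_
  congr 3
  ring

end Consistency

lemma tendsto_measure_le_of_ae_tendsto_zero {Ω : Type*} [MeasurableSpace Ω] {μ : Measure Ω}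
    [IsFiniteMeasure μ] {Y : ℕ → Ω → ℝ≥0∞} (hY : ∀ L, Measurable (Y L))
    (hlim : ∀ᵐ ω ∂μ, Tendsto (fun L => Y L ω) atTop (nhds 0)) {c : ℝ≥0∞} (hc : 0 < c) :
    Tendsto (fun L => μ {ω | c ≤ Y L ω}) atTop (nhds 0) := by
  simpa using tendsto_measure_of_ae_tendsto_indicator_of_isFiniteMeasure atTop
    MeasurableSet.empty (fun L => measurableSet_le measurable_const (hY L))
    (hlim.mono fun ω hω => by simpa using hω.eventually (gt_mem_nhds hc))

/-- Posterior consistency: under a continuous, boundedly dominated, identifiable model on a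
compact metric parameter space, with a prior charging all balls around the truth, the
posterior mass of `{η : d(η, η₀) > ε}` converges to `0` in `P_{η₀}`-probability. -/
theorem posterior_consistency
    {X : Type*} [MeasurableSpace X] (ν : Measure X) [SigmaFinite ν]
    {Θ : Type*} [MetricSpace Θ] [CompactSpace Θ] [MeasurableSpace Θ] [BorelSpace Θ]
    (p : Θ → X → ℝ)
    (hjm : Measurable fun q : Θ × X => p q.1 q.2)
    (hpos : ∀ η x, 0 < p η x)
    (hprob : ∀ η, ∫⁻ x, ENNReal.ofReal (p η x) ∂ν = 1)
    (η₀ : Θ)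
    -- (i) a.e. continuity of the log-densities in the parameter
    (hcont : ∀ᵐ x ∂ν, Continuous fun η : Θ => Real.log (p η x))
    -- (ii) integrable envelope for the log-densities
    (G : X → ℝ)
    (hGint : Integrable G (ν.withDensity fun x => ENNReal.ofReal (p η₀ x)))
    (hGdom : ∀ᵐ x ∂ν, ∀ η : Θ, |Real.log (p η x)| ≤ G x)
    -- (iii) identifiability
    (hident : ∀ η : Θ,
      klDiv' (ν.withDensity fun x => ENNReal.ofReal (p η₀ x))
        (ν.withDensity fun x => ENNReal.ofReal (p η x)) = 0 → dist η η₀ = 0)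
    -- (iv) the prior charges every ball around the truth
    (prior : Measure Θ) [IsProbabilityMeasure prior]
    (hprior : ∀ δ > (0 : ℝ), 0 < prior (Metric.ball η₀ δ))
    -- i.i.d. data with law `P_{η₀}`
    {Ω : Type*} [MeasurableSpace Ω] (μΩ : Measure Ω) [IsProbabilityMeasure μΩ]
    (D : ℕ → Ω → X) (hDmeas : ∀ ℓ, Measurable (D ℓ))
    (hindep : ProbabilityTheory.iIndepFun D μΩ)
    (hid : ∀ ℓ, Measure.map (D ℓ) μΩ = ν.withDensity fun x => ENNReal.ofReal (p η₀ x)) :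
    ∀ ε > (0 : ℝ), ∀ c > (0 : ℝ),
      Tendsto (fun L : ℕ =>
          μΩ {ω | ENNReal.ofReal c ≤
            posteriorMass p prior D L ω {η : Θ | ε < dist η η₀}})
        atTop (nhds 0) := by
  intro ε hε c hc
  set P₀ := ν.withDensity fun x => ENNReal.ofReal (p η₀ x)
  have : IsProbabilityMeasure P₀ :=
    ⟨by rw [withDensity_apply _ MeasurableSet.univ, setLIntegral_univ, hprob η₀]⟩
  have hac : P₀ ≪ ν := withDensity_absolutelyContinuous _ _
  have hp : ∀ η, Measurable (p η) := fun η => hjm.comp (measurable_const.prodMk measurable_id)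
  have hneg : ∀ η, ε ≤ dist η η₀ → ∫ x, logLikRatio p η₀ η x ∂P₀ < 0 := fun η hη =>
    integral_logLikRatio_neg_of_klDiv'_ne_zero ν hp hpos (mt (hident η) (hε.trans_le hη).ne')
  refine tendsto_measure_le_of_ae_tendsto_zero (fun L => measurable_posteriorMass hjm hDmeas L _)
    ?_ (ENNReal.ofReal_pos.2 hc)
  exact ae_tendsto_posteriorMass_zero hjm hpos
    (hac.ae_le (hcont.mono fun x hx => hx.sub continuous_const)) (hGint.const_mul 2)
    (hac.ae_le (hGdom.mono fun x hx η => (abs_sub _ _).trans (by linarith [hx η, hx η₀])))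
    hneg hprior hDmeas hindep hid
end

section
/- For π ∈ (0,1), μ ∈ ℝ and σ² > 0, let H(π, μ, σ²) denote the hurdle distribution on {0,1} × ℝ given by H(π, μ, σ²) = (1 − π)·(δ_0 ⊗ δ_0) + π·(δ_1 ⊗ N(μ, σ²)), where δ_z is the Dirac point mass and N(μ, σ²) the Gaussian law. Then for all π_0, π_1 ∈ (0,1), μ_0, μ_1 ∈ ℝ and σ_0², σ_1² > 0, the Kullback–Leibler divergence decomposes as KL(H(π_0, μ_0, σ_0²), H(π_1, μ_1, σ_1²)) = KL(Bernoulli(π_0), Bernoulli(π_1)) + π_0 · KL(N(μ_0, σ_0²), N(μ_1, σ_1²)) = π_0 log(π_0/π_1) + (1 − π_0) log((1 − π_0)/(1 − π_1)) + π_0 · [log(σ_1/σ_0) + (σ_0² + (μ_0 − μ_1)²)/(2σ_1²) − 1/2]. -/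
open MeasureTheory ProbabilityTheory
open scoped ENNReal NNReal

/-- The Bernoulli distribution on `{0,1}` (modelled as `Bool`) with success probability `π`. -/
noncomputable def bernoulliMeasure (π : ℝ) : Measure Bool :=
  ENNReal.ofReal (1 - π) • Measure.dirac false + ENNReal.ofReal π • Measure.dirac true

/-- The hurdle distribution on `{0,1} × ℝ`:
`H(π, μ, σ²) = (1 − π)·(δ₀ ⊗ δ₀) + π·(δ₁ ⊗ N(μ, σ²))`. -/
noncomputable def hurdleMeasure (π μv σsq : ℝ) : Measure (Bool × ℝ) :=
  ENNReal.ofReal (1 - π) • Measure.dirac (false, (0 : ℝ)) +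
    ENNReal.ofReal π • (Measure.dirac true).prod (gaussianReal μv σsq.toNNReal)

/-!
On the zero branch the likelihood ratio of two hurdle laws is `(1 - π₀)/(1 - π₁)`, on the
positive branch it is `(π₀/π₁) · dN₀/dN₁`. Integrating its logarithm against the first law thus
gives the Bernoulli log-likelihood ratio plus `π₀` times the Gaussian one, and the Gaussian
log-likelihood ratio is a quadratic polynomial whose integral only involves the first two moments
of `N₀`. Both pieces are nonnegative by Gibbs' inequality, so the sum passes through
`ENNReal.ofReal`.
-/

open Real

lemma withDensity_map {α β : Type*} [MeasurableSpace α] [MeasurableSpace β] {f : α → β}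
    (hf : Measurable f) {g : β → ℝ≥0∞} (hg : Measurable g) (μ : Measure α) :
    (μ.map f).withDensity g = (μ.withDensity (g ∘ f)).map f := by
  ext s hs
  rw [withDensity_apply _ hs, Measure.map_apply hf hs, setLIntegral_map hs hg hf,
    withDensity_apply _ (hf hs), Function.comp_def]

section KL

variable {X : Type*} [MeasurableSpace X] {P Q : Measure X}

lemma klDiv'_of_absolutelyContinuous (h : P ≪ Q) :
    klDiv' P Q = ENNReal.ofReal (∫ x, llr P Q x ∂P) :=
  if_pos h

lemma integral_llr_nonneg [IsProbabilityMeasure P] [IsProbabilityMeasure Q] (h : P ≪ Q)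
    (h_int : Integrable (llr P Q) P) : 0 ≤ ∫ x, llr P Q x ∂P := by
  simpa using InformationTheory.integral_llr_add_sub_measure_univ_nonneg h h_int

lemma llr_withDensity_self [SigmaFinite Q] {f : X → ℝ≥0∞} (hf : Measurable f) :
    llr (Q.withDensity f) Q =ᵐ[Q.withDensity f] fun x ↦ log (f x).toReal := by
  filter_upwards [(withDensity_absolutelyContinuous Q f).ae_le
    (Measure.rnDeriv_withDensity Q hf)] with x hx
  rw [llr, hx]

end KL

section Gaussian

variable {μ μ₀ μ₁ : ℝ} {v v₀ v₁ : ℝ≥0}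

lemma integral_sq_gaussianReal : ∫ x, x ^ 2 ∂gaussianReal μ v = v + μ ^ 2 := by
  have h := variance_eq_sub (memLp_id_gaussianReal (μ := μ) (v := v) 2)
  simp only [Pi.pow_apply, id_eq] at h
  rw [variance_id_gaussianReal, integral_id_gaussianReal] at h
  linarith

lemma integral_sub_sq_gaussianReal (m : ℝ) :
    ∫ x, (x - m) ^ 2 ∂gaussianReal μ v = v + (μ - m) ^ 2 := by
  have h := integral_map (μ := gaussianReal μ v) (measurable_sub_const m).aemeasurable
    (f := fun y ↦ y ^ 2) (by fun_prop)
  rwa [gaussianReal_map_sub_const, integral_sq_gaussianReal, eq_comm] at h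

lemma integrable_sub_sq_gaussianReal (m : ℝ) :
    Integrable (fun x ↦ (x - m) ^ 2) (gaussianReal μ v) :=
  ((memLp_id_gaussianReal 2).sub (memLp_const m)).integrable_sq

lemma log_gaussianPDFReal (hv : v ≠ 0) (x : ℝ) :
    log (gaussianPDFReal μ v x) = -log (2 * π * v) / 2 - (x - μ) ^ 2 / (2 * v) := by
  have : (0 : ℝ) < 2 * π * v := by positivity
  rw [gaussianPDFReal, log_mul (by positivity) (exp_pos _).ne', log_inv, log_sqrt this.le,
    log_exp]
  ring

lemma measurable_gaussianPDFReal_ratio (μ₀ μ₁ : ℝ) (v₀ v₁ : ℝ≥0) :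
    Measurable fun x ↦ ENNReal.ofReal (gaussianPDFReal μ₀ v₀ x / gaussianPDFReal μ₁ v₁ x) :=
  ((measurable_gaussianPDFReal _ _).div (measurable_gaussianPDFReal _ _)).ennreal_ofReal

lemma gaussianReal_eq_withDensity (hv₀ : v₀ ≠ 0) (hv₁ : v₁ ≠ 0) :
    gaussianReal μ₀ v₀ = (gaussianReal μ₁ v₁).withDensity
      fun x ↦ ENNReal.ofReal (gaussianPDFReal μ₀ v₀ x / gaussianPDFReal μ₁ v₁ x) := by
  rw [gaussianReal_of_var_ne_zero _ hv₁, gaussianReal_of_var_ne_zero _ hv₀,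
    ← withDensity_mul _ (measurable_gaussianPDF _ _) (measurable_gaussianPDFReal_ratio _ _ _ _)]
  congr 1
  ext x
  simp only [Pi.mul_apply, gaussianPDF]
  rw [← ENNReal.ofReal_mul (gaussianPDFReal_nonneg _ _ x),
    mul_div_cancel₀ _ (gaussianPDFReal_pos _ _ x hv₁).ne']

lemma gaussianReal_absolutelyContinuous_gaussianReal (hv₀ : v₀ ≠ 0) (hv₁ : v₁ ≠ 0) :
    gaussianReal μ₀ v₀ ≪ gaussianReal μ₁ v₁ := by
  rw [gaussianReal_eq_withDensity (μ₁ := μ₁) hv₀ hv₁]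
  exact withDensity_absolutelyContinuous _ _

lemma llr_gaussianReal (hv₀ : v₀ ≠ 0) (hv₁ : v₁ ≠ 0) :
    llr (gaussianReal μ₀ v₀) (gaussianReal μ₁ v₁) =ᵐ[gaussianReal μ₀ v₀]
      fun x ↦ (log (v₁ / v₀) - (x - μ₀) ^ 2 / v₀ + (x - μ₁) ^ 2 / v₁) / 2 := by
  have h := llr_withDensity_self (Q := gaussianReal μ₁ v₁)
    (measurable_gaussianPDFReal_ratio μ₀ μ₁ v₀ v₁)
  rw [← gaussianReal_eq_withDensity hv₀ hv₁] at h
  filter_upwards [h] with x hx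
  have hp₀ := gaussianPDFReal_pos μ₀ v₀ x hv₀
  have hp₁ := gaussianPDFReal_pos μ₁ v₁ x hv₁
  have hv₀' : (0 : ℝ) < v₀ := by positivity
  have hv₁' : (0 : ℝ) < v₁ := by positivity
  rw [hx, ENNReal.toReal_ofReal (by positivity), log_div hp₀.ne' hp₁.ne',
    log_gaussianPDFReal hv₀, log_gaussianPDFReal hv₁, log_div hv₁'.ne' hv₀'.ne',
    log_mul (by positivity) hv₀'.ne', log_mul (by positivity) hv₁'.ne']
  field_simp
  ring

lemma integrable_llr_gaussianReal (hv₀ : v₀ ≠ 0) (hv₁ : v₁ ≠ 0) :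
    Integrable (llr (gaussianReal μ₀ v₀) (gaussianReal μ₁ v₁)) (gaussianReal μ₀ v₀) := by
  refine Integrable.congr ?_ (llr_gaussianReal hv₀ hv₁).symm
  exact ((((integrable_const _).sub ((integrable_sub_sq_gaussianReal μ₀).div_const _)).add
    ((integrable_sub_sq_gaussianReal μ₁).div_const _)).div_const _)

lemma integral_llr_gaussianReal (hv₀ : v₀ ≠ 0) (hv₁ : v₁ ≠ 0) :
    ∫ x, llr (gaussianReal μ₀ v₀) (gaussianReal μ₁ v₁) x ∂gaussianReal μ₀ v₀
      = (log (v₁ / v₀) + (v₀ + (μ₀ - μ₁) ^ 2) / v₁ - 1) / 2 := by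
  have hv₀' : (v₀ : ℝ) ≠ 0 := by positivity
  have h₀ := (integrable_sub_sq_gaussianReal (μ := μ₀) (v := v₀) μ₀).div_const (v₀ : ℝ)
  have h₁ := (integrable_sub_sq_gaussianReal (μ := μ₀) (v := v₀) μ₁).div_const (v₁ : ℝ)
  rw [integral_congr_ae (llr_gaussianReal hv₀ hv₁), integral_div,
    integral_add ?_ h₁, integral_sub (integrable_const _) h₀,
    integral_div, integral_div, integral_sub_sq_gaussianReal, integral_sub_sq_gaussianReal]
  · simp only [integral_const, probReal_univ, one_smul, sub_self]
    field_simp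
    ring
  · exact (integrable_const _).sub h₀

end Gaussian

-- `ProbabilityTheory.bernoulliMeasure` is in scope too, hence the occasional `_root_`.
section Bernoulli

variable {p π₀ π₁ : ℝ}

lemma isProbabilityMeasure_bernoulliMeasure (hp : p ∈ Set.Icc 0 1) :
    IsProbabilityMeasure (bernoulliMeasure p) := by
  constructor
  simp [_root_.bernoulliMeasure, ← ENNReal.ofReal_add (sub_nonneg.2 hp.2) hp.1]

lemma bernoulliMeasure_eq_withDensity (hπ₁ : π₁ ∈ Set.Ioo 0 1) :
    _root_.bernoulliMeasure π₀ = (_root_.bernoulliMeasure π₁).withDensity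
      fun b ↦ ENNReal.ofReal (if b then π₀ / π₁ else (1 - π₀) / (1 - π₁)) := by
  rw [_root_.bernoulliMeasure, _root_.bernoulliMeasure, withDensity_add_measure,
    withDensity_smul_measure, withDensity_smul_measure, dirac_withDensity, dirac_withDensity,
    smul_smul, smul_smul, ← ENNReal.ofReal_mul (sub_nonneg.2 hπ₁.2.le),
    ← ENNReal.ofReal_mul hπ₁.1.le]
  simp only [Bool.false_eq_true, if_false, if_true]
  rw [mul_div_cancel₀ _ (sub_ne_zero.2 hπ₁.2.ne'), mul_div_cancel₀ _ hπ₁.1.ne']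

lemma bernoulliMeasure_absolutelyContinuous (hπ₁ : π₁ ∈ Set.Ioo 0 1) :
    bernoulliMeasure π₀ ≪ bernoulliMeasure π₁ := by
  rw [bernoulliMeasure_eq_withDensity hπ₁]
  exact withDensity_absolutelyContinuous _ _

lemma integral_llr_bernoulliMeasure (hπ₀ : π₀ ∈ Set.Icc 0 1) (hπ₁ : π₁ ∈ Set.Ioo 0 1) :
    ∫ b, llr (bernoulliMeasure π₀) (bernoulliMeasure π₁) b ∂bernoulliMeasure π₀
      = (1 - π₀) * log ((1 - π₀) / (1 - π₁)) + π₀ * log (π₀ / π₁) := by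
  have := isProbabilityMeasure_bernoulliMeasure (Set.Ioo_subset_Icc_self hπ₁)
  have h := llr_withDensity_self (Q := bernoulliMeasure π₁)
    (f := fun b ↦ ENNReal.ofReal (if b then π₀ / π₁ else (1 - π₀) / (1 - π₁)))
    (measurable_of_countable _)
  rw [← bernoulliMeasure_eq_withDensity hπ₁] at h
  rw [integral_congr_ae h, _root_.bernoulliMeasure,
    integral_add_measure (.smul_measure .of_finite ENNReal.ofReal_ne_top)
      (.smul_measure .of_finite ENNReal.ofReal_ne_top),
    integral_smul_measure, integral_smul_measure, integral_dirac, integral_dirac,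
    ENNReal.toReal_ofReal (sub_nonneg.2 hπ₀.2), ENNReal.toReal_ofReal hπ₀.1]
  simp only [Bool.false_eq_true, if_false, if_true, smul_eq_mul]
  rw [ENNReal.toReal_ofReal (div_nonneg (sub_nonneg.2 hπ₀.2) (sub_nonneg.2 hπ₁.2.le)),
    ENNReal.toReal_ofReal (div_nonneg hπ₀.1 hπ₁.1.le)]

end Bernoulli

section Hurdle

variable {Y : Type*} [MeasurableSpace Y] {p π₀ π₁ : ℝ} {y₀ : Y} {ν ν₀ ν₁ : Measure Y}

noncomputable def hurdle (p : ℝ) (y₀ : Y) (ν : Measure Y) : Measure (Bool × Y) :=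
  ENNReal.ofReal (1 - p) • Measure.dirac (false, y₀) +
    ENNReal.ofReal p • (Measure.dirac true).prod ν

lemma hurdleMeasure_eq_hurdle (p μ σsq : ℝ) :
    hurdleMeasure p μ σsq = hurdle p 0 (gaussianReal μ σsq.toNNReal) :=
  rfl

lemma isProbabilityMeasure_hurdle [IsProbabilityMeasure ν] (hp : p ∈ Set.Icc 0 1) :
    IsProbabilityMeasure (hurdle p y₀ ν) := by
  constructor
  simp [hurdle, ← ENNReal.ofReal_add (sub_nonneg.2 hp.2) hp.1]

lemma integral_hurdle [SFinite ν] (hp : p ∈ Set.Icc 0 1) {f : Bool × Y → ℝ} (hf : Measurable f)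
    (hf_int : Integrable (fun y ↦ f (true, y)) ν) :
    ∫ z, f z ∂hurdle p y₀ ν = (1 - p) * f (false, y₀) + p * ∫ y, f (true, y) ∂ν := by
  have hf_int' : Integrable f (ν.map (Prod.mk true)) :=
    (measurableEmbedding_prodMk_left true).integrable_map_iff.2 hf_int
  rw [hurdle, Measure.dirac_prod,
    integral_add_measure ((integrable_dirac' hf.stronglyMeasurable enorm_lt_top).smul_measure
      ENNReal.ofReal_ne_top) (hf_int'.smul_measure ENNReal.ofReal_ne_top),
    integral_smul_measure, integral_smul_measure, integral_dirac' _ _ hf.stronglyMeasurable,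
    (measurableEmbedding_prodMk_left true).integral_map,
    ENNReal.toReal_ofReal (sub_nonneg.2 hp.2), ENNReal.toReal_ofReal hp.1, smul_eq_mul,
    smul_eq_mul]

noncomputable def hurdleDensity (π₀ π₁ : ℝ) (ν₀ ν₁ : Measure Y) (z : Bool × Y) : ℝ≥0∞ :=
  if z.1 then ENNReal.ofReal (π₀ / π₁) * ν₀.rnDeriv ν₁ z.2
  else ENNReal.ofReal ((1 - π₀) / (1 - π₁))

lemma measurable_hurdleDensity : Measurable (hurdleDensity π₀ π₁ ν₀ ν₁) :=
  Measurable.ite (measurable_fst (measurableSet_singleton true))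
    (measurable_const.mul ((Measure.measurable_rnDeriv ν₀ ν₁).comp measurable_snd))
    measurable_const

lemma hurdle_eq_withDensity [SFinite ν₀] [SigmaFinite ν₁] (hπ₁ : π₁ ∈ Set.Ioo 0 1)
    (hν : ν₀ ≪ ν₁) :
    hurdle π₀ y₀ ν₀ = (hurdle π₁ y₀ ν₁).withDensity (hurdleDensity π₀ π₁ ν₀ ν₁) := by
  have hg := measurable_hurdleDensity (π₀ := π₀) (π₁ := π₁) (ν₀ := ν₀) (ν₁ := ν₁)
  rw [hurdle, hurdle, withDensity_add_measure, withDensity_smul_measure, withDensity_smul_measure,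
    dirac_withDensity' hg, Measure.dirac_prod, Measure.dirac_prod,
    withDensity_map measurable_prodMk_left hg]
  simp only [Function.comp_def, hurdleDensity, if_true, Bool.false_eq_true, if_false]
  have h_smul := withDensity_smul' (μ := ν₁) _ (ν₀.rnDeriv ν₁)
    (ENNReal.ofReal_ne_top (r := π₀ / π₁))
  simp only [Pi.smul_def, smul_eq_mul] at h_smul
  rw [h_smul, Measure.withDensity_rnDeriv_eq ν₀ ν₁ hν, Measure.map_smul, smul_smul, smul_smul,
    ← ENNReal.ofReal_mul (sub_nonneg.2 hπ₁.2.le), ← ENNReal.ofReal_mul hπ₁.1.le,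
    mul_div_cancel₀ _ (sub_ne_zero.2 hπ₁.2.ne'), mul_div_cancel₀ _ hπ₁.1.ne']

lemma hurdle_absolutelyContinuous [SFinite ν₀] [SigmaFinite ν₁] (hπ₁ : π₁ ∈ Set.Ioo 0 1)
    (hν : ν₀ ≪ ν₁) : hurdle π₀ y₀ ν₀ ≪ hurdle π₁ y₀ ν₁ := by
  rw [hurdle_eq_withDensity hπ₁ hν]
  exact withDensity_absolutelyContinuous _ _

lemma log_hurdleDensity_true [SigmaFinite ν₀] [ν₀.HaveLebesgueDecomposition ν₁] (hπ₀ : 0 < π₀)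
    (hπ₁ : 0 < π₁) (hν : ν₀ ≪ ν₁) :
    (fun y ↦ log (hurdleDensity π₀ π₁ ν₀ ν₁ (true, y)).toReal) =ᵐ[ν₀]
      fun y ↦ log (π₀ / π₁) + llr ν₀ ν₁ y := by
  filter_upwards [Measure.rnDeriv_pos hν, hν.ae_le (Measure.rnDeriv_lt_top ν₀ ν₁)]
    with y h_pos h_lt
  rw [hurdleDensity, if_pos rfl, ENNReal.toReal_mul, ENNReal.toReal_ofReal (by positivity), llr,
    log_mul (by positivity) (ENNReal.toReal_pos h_pos.ne' h_lt.ne).ne']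

lemma integral_llr_hurdle [IsProbabilityMeasure ν₀] [IsProbabilityMeasure ν₁]
    (hπ₀ : π₀ ∈ Set.Ioc 0 1) (hπ₁ : π₁ ∈ Set.Ioo 0 1) (hν : ν₀ ≪ ν₁)
    (h_int : Integrable (llr ν₀ ν₁) ν₀) :
    ∫ z, llr (hurdle π₀ y₀ ν₀) (hurdle π₁ y₀ ν₁) z ∂hurdle π₀ y₀ ν₀
      = ∫ b, llr (bernoulliMeasure π₀) (bernoulliMeasure π₁) b ∂bernoulliMeasure π₀
        + π₀ * ∫ y, llr ν₀ ν₁ y ∂ν₀ := by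
  have := isProbabilityMeasure_hurdle (y₀ := y₀) (ν := ν₁) (Set.Ioo_subset_Icc_self hπ₁)
  have h_llr := llr_withDensity_self (Q := hurdle π₁ y₀ ν₁)
    (measurable_hurdleDensity (π₀ := π₀) (π₁ := π₁) (ν₀ := ν₀) (ν₁ := ν₁))
  rw [← hurdle_eq_withDensity hπ₁ hν] at h_llr
  have h_true := log_hurdleDensity_true hπ₀.1 hπ₁.1 hν
  rw [integral_congr_ae h_llr, integral_hurdle (Set.Ioc_subset_Icc_self hπ₀)
      measurable_hurdleDensity.ennreal_toReal.log
      (((integrable_const _).add h_int).congr h_true.symm),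
    integral_congr_ae h_true, integral_add (integrable_const _) h_int,
    integral_llr_bernoulliMeasure (Set.Ioc_subset_Icc_self hπ₀) hπ₁]
  simp only [hurdleDensity, Bool.false_eq_true, if_false, integral_const, probReal_univ, one_smul]
  rw [ENNReal.toReal_ofReal (div_nonneg (sub_nonneg.2 hπ₀.2) (sub_nonneg.2 hπ₁.2.le))]
  ring

end Hurdle

/-- Kullback–Leibler decomposition for hurdle distributions:
`KL(H(π₀,μ₀,σ₀²), H(π₁,μ₁,σ₁²))
  = KL(Bernoulli(π₀), Bernoulli(π₁)) + π₀ · KL(N(μ₀,σ₀²), N(μ₁,σ₁²))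
  = π₀ log(π₀/π₁) + (1−π₀) log((1−π₀)/(1−π₁))
      + π₀·[log(σ₁/σ₀) + (σ₀² + (μ₀−μ₁)²)/(2σ₁²) − 1/2]`. -/
theorem hurdle_kl_decomposition
    (π₀ π₁ : ℝ) (hπ₀ : π₀ ∈ Set.Ioo (0 : ℝ) 1) (hπ₁ : π₁ ∈ Set.Ioo (0 : ℝ) 1)
    (μ₀ μ₁ : ℝ) (σ₀ σ₁ : ℝ) (hσ₀ : 0 < σ₀) (hσ₁ : 0 < σ₁) :
    klDiv' (hurdleMeasure π₀ μ₀ (σ₀ ^ 2)) (hurdleMeasure π₁ μ₁ (σ₁ ^ 2)) =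
        klDiv' (bernoulliMeasure π₀) (bernoulliMeasure π₁) +
          ENNReal.ofReal π₀ *
            klDiv' (gaussianReal μ₀ (σ₀ ^ 2).toNNReal) (gaussianReal μ₁ (σ₁ ^ 2).toNNReal) ∧
    klDiv' (hurdleMeasure π₀ μ₀ (σ₀ ^ 2)) (hurdleMeasure π₁ μ₁ (σ₁ ^ 2)) =
        ENNReal.ofReal
          (π₀ * Real.log (π₀ / π₁) + (1 - π₀) * Real.log ((1 - π₀) / (1 - π₁)) +
            π₀ * (Real.log (σ₁ / σ₀) + (σ₀ ^ 2 + (μ₀ - μ₁) ^ 2) / (2 * σ₁ ^ 2) - 1 / 2)) := by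
  have hv₀ : (σ₀ ^ 2).toNNReal ≠ 0 := by simpa using hσ₀.ne'
  have hv₁ : (σ₁ ^ 2).toNNReal ≠ 0 := by simpa using hσ₁.ne'
  have := isProbabilityMeasure_bernoulliMeasure (Set.Ioo_subset_Icc_self hπ₀)
  have := isProbabilityMeasure_bernoulliMeasure (Set.Ioo_subset_Icc_self hπ₁)
  have hB := bernoulliMeasure_absolutelyContinuous (π₀ := π₀) hπ₁
  have hN := gaussianReal_absolutelyContinuous_gaussianReal (μ₀ := μ₀) (μ₁ := μ₁) hv₀ hv₁
  have hN_int := integrable_llr_gaussianReal (μ₀ := μ₀) (μ₁ := μ₁) hv₀ hv₁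
  have hN_eq : ∫ x, llr (gaussianReal μ₀ (σ₀ ^ 2).toNNReal) (gaussianReal μ₁ (σ₁ ^ 2).toNNReal) x
      ∂gaussianReal μ₀ (σ₀ ^ 2).toNNReal
      = log (σ₁ / σ₀) + (σ₀ ^ 2 + (μ₀ - μ₁) ^ 2) / (2 * σ₁ ^ 2) - 1 / 2 := by
    rw [integral_llr_gaussianReal hv₀ hv₁, Real.coe_toNNReal _ (sq_nonneg σ₀),
      Real.coe_toNNReal _ (sq_nonneg σ₁), ← div_pow, log_pow]
    field_simp
    ring
  rw [hurdleMeasure_eq_hurdle, hurdleMeasure_eq_hurdle,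
    klDiv'_of_absolutelyContinuous (hurdle_absolutelyContinuous hπ₁ hN),
    integral_llr_hurdle (Set.Ioo_subset_Ioc_self hπ₀) hπ₁ hN hN_int,
    klDiv'_of_absolutelyContinuous hB, klDiv'_of_absolutelyContinuous hN]
  constructor
  · rw [ENNReal.ofReal_add (integral_llr_nonneg hB .of_finite)
      (mul_nonneg hπ₀.1.le (integral_llr_nonneg hN hN_int)), ENNReal.ofReal_mul hπ₀.1.le]
  · rw [integral_llr_bernoulliMeasure (Set.Ioo_subset_Icc_self hπ₀) hπ₁, hN_eq]
    ring_nf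
end
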